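/- Every operator π(X_{i,j}) (defined as in the representation π of o(p,q)⊗ℂ on polynomials in x_1,…,x_p,y_1,…,y_q) commutes with each of the operators H = -E_x - p/2 + E_y + q/2, X⁺ = -(1/2)(Δ_x + r_y²), and X⁻ = (1/2)(r_x² + Δ_y). -/
import Mathlib


open MvPolynomial

noncomputable section

abbrev PolyPQ (p q : ℕ) := MvPolynomial (Fin p ⊕ Fin q) ℂ

noncomputable def mulOp {p q : ℕ} (f : PolyPQ p q) : Module.End ℂ (PolyPQ p q) :=
  LinearMap.mulLeft ℂ f

noncomputable def DOp {p q : ℕ} (i : Fin p ⊕ Fin q) : Module.End ℂ (PolyPQ p q) :=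
  (pderiv i).toLinearMap

noncomputable def Ex (p q : ℕ) : Module.End ℂ (PolyPQ p q) :=
  ∑ i : Fin p, mulOp (X (Sum.inl i)) * DOp (Sum.inl i)

noncomputable def Ey (p q : ℕ) : Module.End ℂ (PolyPQ p q) :=
  ∑ j : Fin q, mulOp (X (Sum.inr j)) * DOp (Sum.inr j)

noncomputable def rx2 (p q : ℕ) : Module.End ℂ (PolyPQ p q) :=
  mulOp (∑ i : Fin p, X (Sum.inl i) ^ 2)

noncomputable def ry2 (p q : ℕ) : Module.End ℂ (PolyPQ p q) :=
  mulOp (∑ j : Fin q, X (Sum.inr j) ^ 2)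

noncomputable def Dx (p q : ℕ) : Module.End ℂ (PolyPQ p q) :=
  ∑ i : Fin p, DOp (Sum.inl i) * DOp (Sum.inl i)

noncomputable def Dy (p q : ℕ) : Module.End ℂ (PolyPQ p q) :=
  ∑ j : Fin q, DOp (Sum.inr j) * DOp (Sum.inr j)

noncomputable def Hop (p q : ℕ) : Module.End ℂ (PolyPQ p q) :=
  -Ex p q - ((p : ℂ) / 2) • 1 + Ey p q + ((q : ℂ) / 2) • 1

noncomputable def Xplus (p q : ℕ) : Module.End ℂ (PolyPQ p q) :=
  -((1 : ℂ) / 2) • (Dx p q + ry2 p q)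

noncomputable def Xminus (p q : ℕ) : Module.End ℂ (PolyPQ p q) :=
  ((1 : ℂ) / 2) • (rx2 p q + Dy p q)

def idx (p q : ℕ) (i : Fin (p + q)) : Fin p ⊕ Fin q :=
  if h : (i : ℕ) < p then Sum.inl ⟨i, h⟩ else Sum.inr ⟨(i : ℕ) - p, by omega⟩

/-- π on the generators X_{i,j} (the oscillator-type representation). -/
noncomputable def piGen (p q : ℕ) (i j : Fin (p + q)) : Module.End ℂ (PolyPQ p q) :=
  if (i : ℕ) < p then
    if (j : ℕ) < p then
      mulOp (X (idx p q i)) * DOp (idx p q j) - mulOp (X (idx p q j)) * DOp (idx p q i)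
    else
      -Complex.I • (mulOp (X (idx p q i)) * mulOp (X (idx p q j)) +
        DOp (idx p q i) * DOp (idx p q j))
  else
    if (j : ℕ) < p then
      Complex.I • (mulOp (X (idx p q j)) * mulOp (X (idx p q i)) +
        DOp (idx p q j) * DOp (idx p q i))
    else
      mulOp (X (idx p q j)) * DOp (idx p q i) - mulOp (X (idx p q i)) * DOp (idx p q j)

open MvPolynomial


variable {p q : ℕ}

lemma pderiv_pderiv_comm {σ R : Type*} [CommSemiring R] (i j : σ) (f : MvPolynomial σ R) :
    pderiv i (pderiv j f) = pderiv j (pderiv i f) := by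
  classical
  induction f using MvPolynomial.induction_on with
  | C a => simp
  | add f g hf hg => simp [hf, hg]
  | mul_X f s hf =>
      simp only [pderiv_mul, map_add, hf, pderiv_X]
      rcases eq_or_ne s i with rfl | hi <;> rcases eq_or_ne s j with rfl | hj <;>
        simp_all [Pi.single_apply]

lemma mulOp_mul (f g : PolyPQ p q) : mulOp (f * g) = mulOp f * mulOp g := by
  ext h; simp [mulOp, mul_assoc]

lemma mulOp_commute (f g : PolyPQ p q) : mulOp f * mulOp g = mulOp g * mulOp f := by
  rw [← mulOp_mul, ← mulOp_mul, mul_comm]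

lemma mulOp_smul (c : ℂ) (f : PolyPQ p q) : mulOp (c • f) = c • mulOp f := by
  ext g; simp [mulOp, smul_mul_assoc]

lemma DOp_comm (s t : Fin p ⊕ Fin q) : (DOp s : Module.End ℂ (PolyPQ p q)) * DOp t = DOp t * DOp s :=
  LinearMap.ext fun f => pderiv_pderiv_comm s t f

lemma DOp_mulOp (s : Fin p ⊕ Fin q) (f : PolyPQ p q) :
    (DOp s : Module.End ℂ (PolyPQ p q)) * mulOp f = mulOp f * DOp s + mulOp (pderiv s f) := by
  ext g
  simp [mulOp, DOp, pderiv_mul, add_comm, mul_comm]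

lemma D_mul_A (s t : Fin p ⊕ Fin q) :
    (DOp s : Module.End ℂ (PolyPQ p q)) * mulOp (X t) =
      mulOp (X t) * DOp s + if s = t then 1 else 0 := by
  rw [DOp_mulOp]
  congr 1
  rcases eq_or_ne s t with rfl | h
  · simp only [if_pos rfl]
    ext g; simp [mulOp]
  · simp only [if_neg h]
    ext g; simp [mulOp, pderiv_X_of_ne (Ne.symm h)]



section Generic
variable {M : Type*} [Ring M]

lemma sum_swap_d {ι : Type*} [Fintype ι] [DecidableEq ι] (T : ι → M) (g : M) (i : ι) (d : M)
    (key : ∀ u, T u * g = g * T u + if u = i then d else 0) :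
    (∑ u, T u) * g = g * (∑ u, T u) + d := by
  rw [Finset.sum_mul]
  calc ∑ u, T u * g = ∑ u, (g * T u + if u = i then d else 0) := by
        exact Finset.sum_congr rfl fun u _ => key u
    _ = (∑ u, g * T u) + ∑ u, (if u = i then d else 0) := Finset.sum_add_distrib
    _ = g * (∑ u, T u) + d := by
        rw [← Finset.mul_sum, Finset.sum_ite_eq' Finset.univ i fun _ => d,
          if_pos (Finset.mem_univ i)]

lemma sum_swap_0 {ι : Type*} [Fintype ι] (T : ι → M) (g : M)
    (key : ∀ u, T u * g = g * T u) :
    (∑ u, T u) * g = g * (∑ u, T u) := by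
  rw [Finset.sum_mul, Finset.mul_sum]
  exact Finset.sum_congr rfl fun u _ => key u

/-- (P*Y)*Z = Z*(P*Y) + P*c  when P commutes with Z and Y*Z = Z*Y + c -/
lemma lswap {P Y Z c : M} (hP : P * Z = Z * P) (h : Y * Z = Z * Y + c) :
    (P * Y) * Z = Z * (P * Y) + P * c := by
  rw [mul_assoc, h, mul_add, ← mul_assoc, hP, mul_assoc]

lemma rswap {P Y Z c : M} (hY : Y * Z = Z * Y) (hP : P * Z = Z * P + c) :
    (P * Y) * Z = Z * (P * Y) + c * Y := by
  rw [mul_assoc, hY, ← mul_assoc, hP, add_mul, mul_assoc]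

lemma sq_swap {Y Z c : M} (h : Y * Z = Z * Y + c) :
    (Y * Y) * Z = Z * (Y * Y) + (Y * c + c * Y) := by
  rw [mul_assoc, h, mul_add, ← mul_assoc, h, add_mul, mul_assoc]
  abel

/-- T*(P*Q) = (P*Q)*T + (P*dQ + dP*Q) -/
lemma op_swap_mul {T P Q dP dQ : M} (hP : T * P = P * T + dP) (hQ : T * Q = Q * T + dQ) :
    T * (P * Q) = (P * Q) * T + (P * dQ + dP * Q) := by
  rw [← mul_assoc, hP, add_mul, mul_assoc, hQ, mul_add, ← mul_assoc]
  abel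

lemma diff_swap {T g1 g2 D : M} (h1 : T * g1 = g1 * T + D) (h2 : T * g2 = g2 * T + D) :
    (g1 - g2) * T = T * (g1 - g2) := by
  rw [sub_mul, mul_sub, h1, h2]; abel

lemma add_swap {T g1 g2 D1 D2 : M} (h1 : T * g1 = g1 * T + D1) (h2 : T * g2 = g2 * T + D2) :
    T * (g1 + g2) = (g1 + g2) * T + (D1 + D2) := by
  rw [mul_add, add_mul, h1, h2]; abel

end Generic

lemma end_neg_mul {p q : ℕ} (a b : Module.End ℂ (PolyPQ p q)) : -a * b = -(a * b) := neg_mul a b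
lemma end_mul_neg {p q : ℕ} (a b : Module.End ℂ (PolyPQ p q)) : a * -b = -(a * b) := mul_neg a b

section Glue
variable {g T1 T2 d e : Module.End ℂ (PolyPQ p q)}

lemma smul_add_glue (c : ℂ) (h1 : T1 * g = g * T1 + d) (h2 : T2 * g = g * T2 + e)
    (hde : d + e = 0) : g * (c • (T1 + T2)) = (c • (T1 + T2)) * g := by
  rw [mul_smul_comm, smul_mul_assoc, add_mul, mul_add, h1, h2]
  congr 1
  have : g * T1 + d + (g * T2 + e) = g * T1 + g * T2 + (d + e) := by abel
  rw [this, hde, add_zero]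


lemma Hop_glue (hx : Ex p q * g = g * Ex p q + d) (hy : Ey p q * g = g * Ey p q + d) :
    g * Hop p q = Hop p q * g := by
  unfold Hop
  simp only [mul_add, mul_sub, add_mul, sub_mul, end_mul_neg, end_neg_mul, mul_smul_comm,
    smul_mul_assoc, mul_one, one_mul, hx, hy]
  abel

end Glue


section Swaps
variable {p q : ℕ}

lemma mulOp_zero : (mulOp 0 : Module.End ℂ (PolyPQ p q)) = 0 := by
  ext g; simp [mulOp]

lemma h_DA_eq (s : Fin p ⊕ Fin q) :
    (DOp s : Module.End ℂ (PolyPQ p q)) * mulOp (X s) = mulOp (X s) * DOp s + 1 := by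
  rw [D_mul_A, if_pos rfl]

lemma h_DA_ne {s t : Fin p ⊕ Fin q} (h : s ≠ t) :
    (DOp s : Module.End ℂ (PolyPQ p q)) * mulOp (X t) = mulOp (X t) * DOp s := by
  rw [D_mul_A, if_neg h, add_zero]

lemma h_AD_eq (s : Fin p ⊕ Fin q) :
    (mulOp (X s) : Module.End ℂ (PolyPQ p q)) * DOp s = DOp s * mulOp (X s) + (-1 : ℂ) • 1 := by
  rw [h_DA_eq s]; module

lemma h_AD_ne {s t : Fin p ⊕ Fin q} (h : s ≠ t) :
    (mulOp (X t) : Module.End ℂ (PolyPQ p q)) * DOp s = DOp s * mulOp (X t) :=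
  (h_DA_ne h).symm

lemma lswap0 {M : Type*} [Ring M] {P Y Z : M} (hP : P * Z = Z * P) (h : Y * Z = Z * Y) :
    (P * Y) * Z = Z * (P * Y) := by
  rw [mul_assoc, h, ← mul_assoc, hP, mul_assoc]

lemma rswap0 {M : Type*} [Ring M] {P Y Z : M} (hY : Y * Z = Z * Y) (hP : P * Z = Z * P) :
    (P * Y) * Z = Z * (P * Y) := lswap0 hP hY

-- Ex swaps
lemma Ex_A_l (a : Fin p) :
    Ex p q * mulOp (X (Sum.inl a)) =
      mulOp (X (Sum.inl a)) * Ex p q + mulOp (X (Sum.inl a)) := by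
  unfold Ex
  refine sum_swap_d _ _ a _ fun u => ?_
  rcases eq_or_ne u a with rfl | hu
  · rw [if_pos rfl, lswap (mulOp_commute _ _) (h_DA_eq (Sum.inl u)), mul_one]
  · rw [if_neg hu, add_zero]
    exact lswap0 (mulOp_commute _ _) (h_DA_ne (by simpa using hu))

lemma Ex_A_r (b : Fin q) :
    Ex p q * mulOp (X (Sum.inr b)) = mulOp (X (Sum.inr b)) * Ex p q + 0 := by
  unfold Ex
  rw [add_zero]
  exact sum_swap_0 _ _ fun u => lswap0 (mulOp_commute _ _) (h_DA_ne (by simp))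

lemma Ex_D_l (a : Fin p) :
    Ex p q * DOp (Sum.inl a) =
      DOp (Sum.inl a) * Ex p q + (-1 : ℂ) • DOp (Sum.inl a) := by
  unfold Ex
  refine sum_swap_d _ _ a _ fun u => ?_
  rcases eq_or_ne u a with rfl | hu
  · rw [if_pos rfl, rswap rfl (h_AD_eq (Sum.inl u)), smul_mul_assoc, one_mul]
  · rw [if_neg hu, add_zero]
    exact rswap0 (DOp_comm _ _) (h_AD_ne (by simpa using Ne.symm hu))

lemma Ex_D_r (b : Fin q) :
    Ex p q * DOp (Sum.inr b) = DOp (Sum.inr b) * Ex p q + 0 := by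
  unfold Ex
  rw [add_zero]
  exact sum_swap_0 _ _ fun u => rswap0 (DOp_comm _ _) (h_AD_ne (by simp))

-- Ey swaps
lemma Ey_A_r (b : Fin q) :
    Ey p q * mulOp (X (Sum.inr b)) =
      mulOp (X (Sum.inr b)) * Ey p q + mulOp (X (Sum.inr b)) := by
  unfold Ey
  refine sum_swap_d _ _ b _ fun u => ?_
  rcases eq_or_ne u b with rfl | hu
  · rw [if_pos rfl, lswap (mulOp_commute _ _) (h_DA_eq (Sum.inr u)), mul_one]
  · rw [if_neg hu, add_zero]
    exact lswap0 (mulOp_commute _ _) (h_DA_ne (by simpa using hu))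

lemma Ey_A_l (a : Fin p) :
    Ey p q * mulOp (X (Sum.inl a)) = mulOp (X (Sum.inl a)) * Ey p q + 0 := by
  unfold Ey
  rw [add_zero]
  exact sum_swap_0 _ _ fun u => lswap0 (mulOp_commute _ _) (h_DA_ne (by simp))

lemma Ey_D_r (b : Fin q) :
    Ey p q * DOp (Sum.inr b) =
      DOp (Sum.inr b) * Ey p q + (-1 : ℂ) • DOp (Sum.inr b) := by
  unfold Ey
  refine sum_swap_d _ _ b _ fun u => ?_
  rcases eq_or_ne u b with rfl | hu
  · rw [if_pos rfl, rswap rfl (h_AD_eq (Sum.inr u)), smul_mul_assoc, one_mul]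
  · rw [if_neg hu, add_zero]
    exact rswap0 (DOp_comm _ _) (h_AD_ne (by simpa using Ne.symm hu))

lemma Ey_D_l (a : Fin p) :
    Ey p q * DOp (Sum.inl a) = DOp (Sum.inl a) * Ey p q + 0 := by
  unfold Ey
  rw [add_zero]
  exact sum_swap_0 _ _ fun u => rswap0 (DOp_comm _ _) (h_AD_ne (by simp))

-- Dx swaps
lemma Dx_A_l (a : Fin p) :
    Dx p q * mulOp (X (Sum.inl a)) =
      mulOp (X (Sum.inl a)) * Dx p q + (2 : ℂ) • DOp (Sum.inl a) := by
  unfold Dx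
  refine sum_swap_d _ _ a _ fun u => ?_
  rcases eq_or_ne u a with rfl | hu
  · rw [if_pos rfl, sq_swap (h_DA_eq (Sum.inl u)), mul_one, one_mul, ← two_smul ℂ]
  · rw [if_neg hu, add_zero]
    exact lswap0 (h_DA_ne (by simpa using hu)) (h_DA_ne (by simpa using hu))

lemma Dx_A_r (b : Fin q) :
    Dx p q * mulOp (X (Sum.inr b)) = mulOp (X (Sum.inr b)) * Dx p q + 0 := by
  unfold Dx
  rw [add_zero]
  exact sum_swap_0 _ _ fun u => lswap0 (h_DA_ne (by simp)) (h_DA_ne (by simp))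

lemma Dx_D (t : Fin p ⊕ Fin q) :
    Dx p q * DOp t = DOp t * Dx p q + 0 := by
  unfold Dx
  rw [add_zero]
  exact sum_swap_0 _ _ fun u => lswap0 (DOp_comm _ _) (DOp_comm _ _)

-- Dy swaps
lemma Dy_A_r (b : Fin q) :
    Dy p q * mulOp (X (Sum.inr b)) =
      mulOp (X (Sum.inr b)) * Dy p q + (2 : ℂ) • DOp (Sum.inr b) := by
  unfold Dy
  refine sum_swap_d _ _ b _ fun u => ?_
  rcases eq_or_ne u b with rfl | hu
  · rw [if_pos rfl, sq_swap (h_DA_eq (Sum.inr u)), mul_one, one_mul, ← two_smul ℂ]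
  · rw [if_neg hu, add_zero]
    exact lswap0 (h_DA_ne (by simpa using hu)) (h_DA_ne (by simpa using hu))

lemma Dy_A_l (a : Fin p) :
    Dy p q * mulOp (X (Sum.inl a)) = mulOp (X (Sum.inl a)) * Dy p q + 0 := by
  unfold Dy
  rw [add_zero]
  exact sum_swap_0 _ _ fun u => lswap0 (h_DA_ne (by simp)) (h_DA_ne (by simp))

lemma Dy_D (t : Fin p ⊕ Fin q) :
    Dy p q * DOp t = DOp t * Dy p q + 0 := by
  unfold Dy
  rw [add_zero]
  exact sum_swap_0 _ _ fun u => lswap0 (DOp_comm _ _) (DOp_comm _ _)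

-- rx2 / ry2 swaps
lemma rx2_A (t : Fin p ⊕ Fin q) :
    rx2 p q * mulOp (X t) = mulOp (X t) * rx2 p q + 0 := by
  rw [add_zero]; exact mulOp_commute _ _

lemma ry2_A (t : Fin p ⊕ Fin q) :
    ry2 p q * mulOp (X t) = mulOp (X t) * ry2 p q + 0 := by
  rw [add_zero]; exact mulOp_commute _ _

lemma pderiv_sumsq_x_l (a : Fin p) :
    pderiv (Sum.inl a) (∑ u : Fin p, (X (Sum.inl u) : PolyPQ p q) ^ 2) =
      (2 : ℂ) • X (Sum.inl a) := by
  rw [map_sum, Finset.sum_eq_single a]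
  · rw [pderiv_pow, pderiv_X_self, smul_eq_C_mul]
    simp [map_ofNat]
  · intro b _ hb
    rw [pderiv_pow, pderiv_X_of_ne (by simpa using hb), mul_zero]
  · simp

lemma pderiv_sumsq_x_r (b : Fin q) :
    pderiv (Sum.inr b) (∑ u : Fin p, (X (Sum.inl u) : PolyPQ p q) ^ 2) = 0 := by
  rw [map_sum]
  refine Finset.sum_eq_zero fun u _ => ?_
  rw [pderiv_pow, pderiv_X_of_ne (by simp), mul_zero]

lemma pderiv_sumsq_y_r (b : Fin q) :
    pderiv (Sum.inr b) (∑ u : Fin q, (X (Sum.inr u) : PolyPQ p q) ^ 2) =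
      (2 : ℂ) • X (Sum.inr b) := by
  rw [map_sum, Finset.sum_eq_single b]
  · rw [pderiv_pow, pderiv_X_self, smul_eq_C_mul]
    simp [map_ofNat]
  · intro u _ hu
    rw [pderiv_pow, pderiv_X_of_ne (by simpa using hu), mul_zero]
  · simp

lemma pderiv_sumsq_y_l (a : Fin p) :
    pderiv (Sum.inl a) (∑ u : Fin q, (X (Sum.inr u) : PolyPQ p q) ^ 2) = 0 := by
  rw [map_sum]
  refine Finset.sum_eq_zero fun u _ => ?_
  rw [pderiv_pow, pderiv_X_of_ne (by simp), mul_zero]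

lemma rx2_D_l (a : Fin p) :
    rx2 p q * DOp (Sum.inl a) =
      DOp (Sum.inl a) * rx2 p q + (-2 : ℂ) • mulOp (X (Sum.inl a)) := by
  have h := DOp_mulOp (Sum.inl a) (∑ u : Fin p, (X (Sum.inl u) : PolyPQ p q) ^ 2)
  rw [pderiv_sumsq_x_l, mulOp_smul] at h
  unfold rx2
  rw [h]
  module

lemma rx2_D_r (b : Fin q) :
    rx2 p q * DOp (Sum.inr b) = DOp (Sum.inr b) * rx2 p q + 0 := by
  have h := DOp_mulOp (Sum.inr b) (∑ u : Fin p, (X (Sum.inl u) : PolyPQ p q) ^ 2)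
  rw [pderiv_sumsq_x_r, mulOp_zero, add_zero] at h
  rw [add_zero]
  exact h.symm

lemma ry2_D_r (b : Fin q) :
    ry2 p q * DOp (Sum.inr b) =
      DOp (Sum.inr b) * ry2 p q + (-2 : ℂ) • mulOp (X (Sum.inr b)) := by
  have h := DOp_mulOp (Sum.inr b) (∑ u : Fin q, (X (Sum.inr u) : PolyPQ p q) ^ 2)
  rw [pderiv_sumsq_y_r, mulOp_smul] at h
  unfold ry2
  rw [h]
  module

lemma ry2_D_l (a : Fin p) :
    ry2 p q * DOp (Sum.inl a) = DOp (Sum.inl a) * ry2 p q + 0 := by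
  have h := DOp_mulOp (Sum.inl a) (∑ u : Fin q, (X (Sum.inr u) : PolyPQ p q) ^ 2)
  rw [pderiv_sumsq_y_l, mulOp_zero, add_zero] at h
  rw [add_zero]
  exact h.symm

end Swaps



lemma op_swap_mul' {M : Type*} [Ring M] {T P Q dP dQ D : M}
    (hP : T * P = P * T + dP) (hQ : T * Q = Q * T + dQ)
    (hD : P * dQ + dP * Q = D) :
    T * (P * Q) = (P * Q) * T + D := by
  rw [op_swap_mul hP hQ, hD]

lemma sub_swap {M : Type*} [Ring M] {T g1 g2 D1 D2 : M}
    (h1 : T * g1 = g1 * T + D1) (h2 : T * g2 = g2 * T + D2) :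
    T * (g1 - g2) = (g1 - g2) * T + (D1 - D2) := by
  rw [mul_sub, sub_mul, h1, h2]; abel

lemma sub_swap' {M : Type*} [Ring M] {T g1 g2 D1 D2 D : M}
    (h1 : T * g1 = g1 * T + D1) (h2 : T * g2 = g2 * T + D2) (hD : D1 - D2 = D) :
    T * (g1 - g2) = (g1 - g2) * T + D := by
  rw [sub_swap h1 h2, hD]

lemma add_swap' {M : Type*} [Ring M] {T g1 g2 D1 D2 D : M}
    (h1 : T * g1 = g1 * T + D1) (h2 : T * g2 = g2 * T + D2) (hD : D1 + D2 = D) :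
    T * (g1 + g2) = (g1 + g2) * T + D := by
  rw [add_swap h1 h2, hD]

set_option maxHeartbeats 1000000

section Cases
variable {p q : ℕ}

lemma smul_wrap {g T : Module.End ℂ (PolyPQ p q)} (c : ℂ) (h : g * T = T * g) :
    (c • g) * T = T * (c • g) := by
  rw [smul_mul_assoc, h, mul_smul_comm]

lemma caseXX (a b : Fin p) :
    (mulOp (X (Sum.inl a)) * DOp (Sum.inl b) - mulOp (X (Sum.inl b)) * DOp (Sum.inl a)) * Hop p q = Hop p q * (mulOp (X (Sum.inl a)) * DOp (Sum.inl b) - mulOp (X (Sum.inl b)) * DOp (Sum.inl a)) ∧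
    (mulOp (X (Sum.inl a)) * DOp (Sum.inl b) - mulOp (X (Sum.inl b)) * DOp (Sum.inl a)) * Xplus p q = Xplus p q * (mulOp (X (Sum.inl a)) * DOp (Sum.inl b) - mulOp (X (Sum.inl b)) * DOp (Sum.inl a)) ∧
    (mulOp (X (Sum.inl a)) * DOp (Sum.inl b) - mulOp (X (Sum.inl b)) * DOp (Sum.inl a)) * Xminus p q = Xminus p q * (mulOp (X (Sum.inl a)) * DOp (Sum.inl b) - mulOp (X (Sum.inl b)) * DOp (Sum.inl a)) := by
  have hE : Ex p q * (mulOp (X (Sum.inl a)) * DOp (Sum.inl b) - mulOp (X (Sum.inl b)) * DOp (Sum.inl a)) = (mulOp (X (Sum.inl a)) * DOp (Sum.inl b) - mulOp (X (Sum.inl b)) * DOp (Sum.inl a)) * Ex p q + 0 ∧ Ey p q * (mulOp (X (Sum.inl a)) * DOp (Sum.inl b) - mulOp (X (Sum.inl b)) * DOp (Sum.inl a)) = (mulOp (X (Sum.inl a)) * DOp (Sum.inl b) - mulOp (X (Sum.inl b)) * DOp (Sum.inl a)) * Ey p q + 0 := by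
    constructor
    · exact sub_swap' (op_swap_mul' (Ex_A_l a) (Ex_D_l b) (by rw [mul_smul_comm]))
        (op_swap_mul' (Ex_A_l b) (Ex_D_l a) (by rw [mul_smul_comm])) (by module)
    · exact sub_swap' (op_swap_mul' (Ey_A_l a) (Ey_D_l b) (by rw [mul_zero, zero_mul, add_zero]))
        (op_swap_mul' (Ey_A_l b) (Ey_D_l a) (by rw [mul_zero, zero_mul, add_zero]))
        (by module)
  have hD : Dx p q * (mulOp (X (Sum.inl a)) * DOp (Sum.inl b) - mulOp (X (Sum.inl b)) * DOp (Sum.inl a)) = (mulOp (X (Sum.inl a)) * DOp (Sum.inl b) - mulOp (X (Sum.inl b)) * DOp (Sum.inl a)) * Dx p q + 0 :=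
    sub_swap' (op_swap_mul' (Dx_A_l a) (Dx_D (Sum.inl b)) (by rw [mul_zero, zero_add, smul_mul_assoc]))
      (op_swap_mul' (Dx_A_l b) (Dx_D (Sum.inl a)) (by rw [mul_zero, zero_add, smul_mul_assoc]))
      (by rw [DOp_comm (Sum.inl a) (Sum.inl b)]; module)
  have hR : rx2 p q * (mulOp (X (Sum.inl a)) * DOp (Sum.inl b) - mulOp (X (Sum.inl b)) * DOp (Sum.inl a)) = (mulOp (X (Sum.inl a)) * DOp (Sum.inl b) - mulOp (X (Sum.inl b)) * DOp (Sum.inl a)) * rx2 p q + 0 :=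
    sub_swap' (op_swap_mul' (rx2_A (Sum.inl a)) (rx2_D_l b) (by rw [zero_mul, add_zero, mul_smul_comm]))
      (op_swap_mul' (rx2_A (Sum.inl b)) (rx2_D_l a) (by rw [zero_mul, add_zero, mul_smul_comm]))
      (by rw [mulOp_commute (X (Sum.inl a)) (X (Sum.inl b))]; module)
  have hOR : ry2 p q * (mulOp (X (Sum.inl a)) * DOp (Sum.inl b) - mulOp (X (Sum.inl b)) * DOp (Sum.inl a)) = (mulOp (X (Sum.inl a)) * DOp (Sum.inl b) - mulOp (X (Sum.inl b)) * DOp (Sum.inl a)) * ry2 p q + 0 :=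
    sub_swap' (op_swap_mul' (ry2_A (Sum.inl a)) (ry2_D_l b) (by rw [mul_zero, zero_mul, add_zero]))
      (op_swap_mul' (ry2_A (Sum.inl b)) (ry2_D_l a) (by rw [mul_zero, zero_mul, add_zero]))
      (by module)
  have hOD : Dy p q * (mulOp (X (Sum.inl a)) * DOp (Sum.inl b) - mulOp (X (Sum.inl b)) * DOp (Sum.inl a)) = (mulOp (X (Sum.inl a)) * DOp (Sum.inl b) - mulOp (X (Sum.inl b)) * DOp (Sum.inl a)) * Dy p q + 0 :=
    sub_swap' (op_swap_mul' (Dy_A_l a) (Dy_D (Sum.inl b)) (by rw [mul_zero, zero_mul, add_zero]))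
      (op_swap_mul' (Dy_A_l b) (Dy_D (Sum.inl a)) (by rw [mul_zero, zero_mul, add_zero]))
      (by module)
  refine ⟨Hop_glue hE.1 hE.2, ?_, ?_⟩
  · exact smul_add_glue _ hD hOR (by rw [add_zero])
  · exact smul_add_glue _ hR hOD (by rw [add_zero])

lemma caseYY (a b : Fin q) :
    (mulOp (X (Sum.inr a)) * DOp (Sum.inr b) - mulOp (X (Sum.inr b)) * DOp (Sum.inr a)) * Hop p q = Hop p q * (mulOp (X (Sum.inr a)) * DOp (Sum.inr b) - mulOp (X (Sum.inr b)) * DOp (Sum.inr a)) ∧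
    (mulOp (X (Sum.inr a)) * DOp (Sum.inr b) - mulOp (X (Sum.inr b)) * DOp (Sum.inr a)) * Xplus p q = Xplus p q * (mulOp (X (Sum.inr a)) * DOp (Sum.inr b) - mulOp (X (Sum.inr b)) * DOp (Sum.inr a)) ∧
    (mulOp (X (Sum.inr a)) * DOp (Sum.inr b) - mulOp (X (Sum.inr b)) * DOp (Sum.inr a)) * Xminus p q = Xminus p q * (mulOp (X (Sum.inr a)) * DOp (Sum.inr b) - mulOp (X (Sum.inr b)) * DOp (Sum.inr a)) := by
  have hE : Ex p q * (mulOp (X (Sum.inr a)) * DOp (Sum.inr b) - mulOp (X (Sum.inr b)) * DOp (Sum.inr a)) = (mulOp (X (Sum.inr a)) * DOp (Sum.inr b) - mulOp (X (Sum.inr b)) * DOp (Sum.inr a)) * Ex p q + 0 ∧ Ey p q * (mulOp (X (Sum.inr a)) * DOp (Sum.inr b) - mulOp (X (Sum.inr b)) * DOp (Sum.inr a)) = (mulOp (X (Sum.inr a)) * DOp (Sum.inr b) - mulOp (X (Sum.inr b)) * DOp (Sum.inr a)) * Ey p q + 0 := by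
    constructor
    · exact sub_swap' (op_swap_mul' (Ex_A_r a) (Ex_D_r b) (by rw [mul_zero, zero_mul, add_zero]))
        (op_swap_mul' (Ex_A_r b) (Ex_D_r a) (by rw [mul_zero, zero_mul, add_zero]))
        (by module)
    · exact sub_swap' (op_swap_mul' (Ey_A_r a) (Ey_D_r b) (by rw [mul_smul_comm]))
        (op_swap_mul' (Ey_A_r b) (Ey_D_r a) (by rw [mul_smul_comm])) (by module)
  have hD : Dy p q * (mulOp (X (Sum.inr a)) * DOp (Sum.inr b) - mulOp (X (Sum.inr b)) * DOp (Sum.inr a)) = (mulOp (X (Sum.inr a)) * DOp (Sum.inr b) - mulOp (X (Sum.inr b)) * DOp (Sum.inr a)) * Dy p q + 0 :=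
    sub_swap' (op_swap_mul' (Dy_A_r a) (Dy_D (Sum.inr b)) (by rw [mul_zero, zero_add, smul_mul_assoc]))
      (op_swap_mul' (Dy_A_r b) (Dy_D (Sum.inr a)) (by rw [mul_zero, zero_add, smul_mul_assoc]))
      (by rw [DOp_comm (Sum.inr a) (Sum.inr b)]; module)
  have hR : ry2 p q * (mulOp (X (Sum.inr a)) * DOp (Sum.inr b) - mulOp (X (Sum.inr b)) * DOp (Sum.inr a)) = (mulOp (X (Sum.inr a)) * DOp (Sum.inr b) - mulOp (X (Sum.inr b)) * DOp (Sum.inr a)) * ry2 p q + 0 :=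
    sub_swap' (op_swap_mul' (ry2_A (Sum.inr a)) (ry2_D_r b) (by rw [zero_mul, add_zero, mul_smul_comm]))
      (op_swap_mul' (ry2_A (Sum.inr b)) (ry2_D_r a) (by rw [zero_mul, add_zero, mul_smul_comm]))
      (by rw [mulOp_commute (X (Sum.inr a)) (X (Sum.inr b))]; module)
  have hOR : rx2 p q * (mulOp (X (Sum.inr a)) * DOp (Sum.inr b) - mulOp (X (Sum.inr b)) * DOp (Sum.inr a)) = (mulOp (X (Sum.inr a)) * DOp (Sum.inr b) - mulOp (X (Sum.inr b)) * DOp (Sum.inr a)) * rx2 p q + 0 :=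
    sub_swap' (op_swap_mul' (rx2_A (Sum.inr a)) (rx2_D_r b) (by rw [mul_zero, zero_mul, add_zero]))
      (op_swap_mul' (rx2_A (Sum.inr b)) (rx2_D_r a) (by rw [mul_zero, zero_mul, add_zero]))
      (by module)
  have hOD : Dx p q * (mulOp (X (Sum.inr a)) * DOp (Sum.inr b) - mulOp (X (Sum.inr b)) * DOp (Sum.inr a)) = (mulOp (X (Sum.inr a)) * DOp (Sum.inr b) - mulOp (X (Sum.inr b)) * DOp (Sum.inr a)) * Dx p q + 0 :=
    sub_swap' (op_swap_mul' (Dx_A_r a) (Dx_D (Sum.inr b)) (by rw [mul_zero, zero_mul, add_zero]))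
      (op_swap_mul' (Dx_A_r b) (Dx_D (Sum.inr a)) (by rw [mul_zero, zero_mul, add_zero]))
      (by module)
  refine ⟨Hop_glue hE.1 hE.2, ?_, ?_⟩
  · exact smul_add_glue _ hOD hR (by rw [add_zero])
  · exact smul_add_glue _ hOR hD (by rw [add_zero])

end Cases


section XY
variable {p q : ℕ}

lemma caseXY (a : Fin p) (b : Fin q) :
    (mulOp (X (Sum.inl a)) * mulOp (X (Sum.inr b)) + DOp (Sum.inl a) * DOp (Sum.inr b))
        * Hop p q = Hop p q *
      (mulOp (X (Sum.inl a)) * mulOp (X (Sum.inr b)) + DOp (Sum.inl a) * DOp (Sum.inr b)) ∧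
    (mulOp (X (Sum.inl a)) * mulOp (X (Sum.inr b)) + DOp (Sum.inl a) * DOp (Sum.inr b))
        * Xplus p q = Xplus p q *
      (mulOp (X (Sum.inl a)) * mulOp (X (Sum.inr b)) + DOp (Sum.inl a) * DOp (Sum.inr b)) ∧
    (mulOp (X (Sum.inl a)) * mulOp (X (Sum.inr b)) + DOp (Sum.inl a) * DOp (Sum.inr b))
        * Xminus p q = Xminus p q *
      (mulOp (X (Sum.inl a)) * mulOp (X (Sum.inr b)) + DOp (Sum.inl a) * DOp (Sum.inr b)) := by
  have hEx : Ex p q *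
      (mulOp (X (Sum.inl a)) * mulOp (X (Sum.inr b)) + DOp (Sum.inl a) * DOp (Sum.inr b)) =
      (mulOp (X (Sum.inl a)) * mulOp (X (Sum.inr b)) + DOp (Sum.inl a) * DOp (Sum.inr b))
        * Ex p q +
      (mulOp (X (Sum.inl a)) * mulOp (X (Sum.inr b))
        + (-1 : ℂ) • (DOp (Sum.inl a) * DOp (Sum.inr b))) :=
    add_swap' (op_swap_mul' (Ex_A_l a) (Ex_A_r b) (by rw [mul_zero, zero_add]))
      (op_swap_mul' (Ex_D_l a) (Ex_D_r b) (by rw [mul_zero, zero_add, smul_mul_assoc])) rfl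
  have hEy : Ey p q *
      (mulOp (X (Sum.inl a)) * mulOp (X (Sum.inr b)) + DOp (Sum.inl a) * DOp (Sum.inr b)) =
      (mulOp (X (Sum.inl a)) * mulOp (X (Sum.inr b)) + DOp (Sum.inl a) * DOp (Sum.inr b))
        * Ey p q +
      (mulOp (X (Sum.inl a)) * mulOp (X (Sum.inr b))
        + (-1 : ℂ) • (DOp (Sum.inl a) * DOp (Sum.inr b))) :=
    add_swap' (op_swap_mul' (Ey_A_l a) (Ey_A_r b) (by rw [zero_mul, add_zero]))
      (op_swap_mul' (Ey_D_l a) (Ey_D_r b) (by rw [zero_mul, add_zero, mul_smul_comm])) rfl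
  have hDx : Dx p q *
      (mulOp (X (Sum.inl a)) * mulOp (X (Sum.inr b)) + DOp (Sum.inl a) * DOp (Sum.inr b)) =
      (mulOp (X (Sum.inl a)) * mulOp (X (Sum.inr b)) + DOp (Sum.inl a) * DOp (Sum.inr b))
        * Dx p q + (2 : ℂ) • (DOp (Sum.inl a) * mulOp (X (Sum.inr b))) :=
    add_swap' (op_swap_mul' (Dx_A_l a) (Dx_A_r b) (by rw [mul_zero, zero_add, smul_mul_assoc]))
      (op_swap_mul' (Dx_D (Sum.inl a)) (Dx_D (Sum.inr b)) (by rw [mul_zero, zero_mul, add_zero]))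
      (by rw [add_zero])
  have hry : ry2 p q *
      (mulOp (X (Sum.inl a)) * mulOp (X (Sum.inr b)) + DOp (Sum.inl a) * DOp (Sum.inr b)) =
      (mulOp (X (Sum.inl a)) * mulOp (X (Sum.inr b)) + DOp (Sum.inl a) * DOp (Sum.inr b))
        * ry2 p q + (-2 : ℂ) • (DOp (Sum.inl a) * mulOp (X (Sum.inr b))) :=
    add_swap' (op_swap_mul' (ry2_A (Sum.inl a)) (ry2_A (Sum.inr b))
        (by rw [mul_zero, zero_mul, add_zero]))
      (op_swap_mul' (ry2_D_l a) (ry2_D_r b) (by rw [zero_mul, add_zero, mul_smul_comm]))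
      (by rw [zero_add])
  have hrx : rx2 p q *
      (mulOp (X (Sum.inl a)) * mulOp (X (Sum.inr b)) + DOp (Sum.inl a) * DOp (Sum.inr b)) =
      (mulOp (X (Sum.inl a)) * mulOp (X (Sum.inr b)) + DOp (Sum.inl a) * DOp (Sum.inr b))
        * rx2 p q + (-2 : ℂ) • (mulOp (X (Sum.inl a)) * DOp (Sum.inr b)) :=
    add_swap' (op_swap_mul' (rx2_A (Sum.inl a)) (rx2_A (Sum.inr b))
        (by rw [mul_zero, zero_mul, add_zero]))
      (op_swap_mul' (rx2_D_l a) (rx2_D_r b) (by rw [mul_zero, zero_add, smul_mul_assoc]))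
      (by rw [zero_add])
  have hDy : Dy p q *
      (mulOp (X (Sum.inl a)) * mulOp (X (Sum.inr b)) + DOp (Sum.inl a) * DOp (Sum.inr b)) =
      (mulOp (X (Sum.inl a)) * mulOp (X (Sum.inr b)) + DOp (Sum.inl a) * DOp (Sum.inr b))
        * Dy p q + (2 : ℂ) • (mulOp (X (Sum.inl a)) * DOp (Sum.inr b)) :=
    add_swap' (op_swap_mul' (Dy_A_l a) (Dy_A_r b) (by rw [zero_mul, add_zero, mul_smul_comm]))
      (op_swap_mul' (Dy_D (Sum.inl a)) (Dy_D (Sum.inr b)) (by rw [mul_zero, zero_mul, add_zero]))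
      (by rw [add_zero])
  exact ⟨Hop_glue hEx hEy, smul_add_glue _ hDx hry (by module),
    smul_add_glue _ hrx hDy (by module)⟩

end XY


/-- Every π(X_{i,j}) commutes with H, X⁺ and X⁻. -/
theorem piGen_commutes_with_sl2 (p q : ℕ) :
    ∀ i j : Fin (p + q),
      piGen p q i j * Hop p q = Hop p q * piGen p q i j ∧
      piGen p q i j * Xplus p q = Xplus p q * piGen p q i j ∧
      piGen p q i j * Xminus p q = Xminus p q * piGen p q i j := by
  intro i j
  by_cases hi : (i : ℕ) < p <;> by_cases hj : (j : ℕ) < p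
  · simp only [piGen, if_pos hi, if_pos hj, idx, dif_pos hi, dif_pos hj]
    exact caseXX (p := p) (q := q) ⟨i, hi⟩ ⟨j, hj⟩
  · simp only [piGen, if_pos hi, if_neg hj, idx, dif_pos hi, dif_neg hj]
    obtain ⟨h1, h2, h3⟩ := caseXY (p := p) (q := q) ⟨i, hi⟩ ⟨(j : ℕ) - p, by have hi2 := i.isLt; have hj2 := j.isLt; omega⟩
    exact ⟨smul_wrap _ h1, smul_wrap _ h2, smul_wrap _ h3⟩
  · simp only [piGen, if_neg hi, if_pos hj, idx, dif_neg hi, dif_pos hj]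
    obtain ⟨h1, h2, h3⟩ := caseXY (p := p) (q := q) ⟨j, hj⟩ ⟨(i : ℕ) - p, by have hi2 := i.isLt; have hj2 := j.isLt; omega⟩
    exact ⟨smul_wrap _ h1, smul_wrap _ h2, smul_wrap _ h3⟩
  · simp only [piGen, if_neg hi, if_neg hj, idx, dif_neg hi, dif_neg hj]
    exact caseYY (p := p) (q := q) ⟨(j : ℕ) - p, by have hi2 := i.isLt; have hj2 := j.isLt; omega⟩ ⟨(i : ℕ) - p, by have hi2 := i.isLt; have hj2 := j.isLt; omega⟩
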